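/- Cardinality lower bound along the removal sequence: For every index j ≥ 0, the set P_j of the removal sequence satisfies |P_j| ≥ n − 2T. In particular, if n ≥ 2T + 2 then |P_j| ≥ 2 for all j. -/

import Mathlib

/-!
Tag every removed process by what removed it: the round in which it was the only transmitter, or
its length, which was the unique minimum. Within one copy of `[1, T]` these tags are distinct:
a process that is still present when another one is removed cannot carry that other one's tag,
since the removed one was the only carrier among the survivors of that step. Hence at most `2T`
processes are ever removed.
-/

theorem exists_mem_notMem_succ_of_mem_zero {α : Type*} {P : ℕ → Set α} {p : α} (h₀ : p ∈ P 0)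
    {j : ℕ} (hj : p ∉ P j) : ∃ k, p ∈ P k ∧ p ∉ P (k + 1) := by
  induction j with
  | zero => exact absurd h₀ hj
  | succ j ih =>
    by_cases hp : p ∈ P j
    · exact ⟨j, hp, hj⟩
    · exact ih hp

theorem ncard_diff_le_of_unique_tag {α β : Type*} {P : ℕ → Set α} (hP : Antitone P)
    {R : α → β → Prop} {t : Finset β}
    (htag : ∀ k, ∀ p ∈ P k, p ∉ P (k + 1) → ∃ v ∈ t, R p v ∧ ∀ q ∈ P k, q ≠ p → ¬ R q v)
    (j : ℕ) : (P 0 \ P j).ncard ≤ t.card := by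
  have hremoved : ∀ p ∈ P 0 \ P j, ∃ k v, p ∈ P k ∧ v ∈ t ∧ R p v ∧
      ∀ q ∈ P k, q ≠ p → ¬ R q v := by
    rintro p ⟨h₀, hj⟩
    obtain ⟨k, hk, hk'⟩ := exists_mem_notMem_succ_of_mem_zero h₀ hj
    obtain ⟨v, hv⟩ := htag k p hk hk'
    exact ⟨k, v, hk, hv⟩
  obtain hnone | ⟨p₀, hp₀⟩ := (P 0 \ P j).eq_empty_or_nonempty
  · simp [hnone]
  have : Nonempty β := let ⟨_, v, _⟩ := hremoved p₀ hp₀; ⟨v⟩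
  choose! step tag hstep htag_mem htag_carried htag_unique using hremoved
  have hearlier : ∀ p ∈ P 0 \ P j, ∀ q ∈ P 0 \ P j, step p ≤ step q → tag p = tag q → p = q := by
    intro p hp q hq hle heq
    by_contra hne
    exact htag_unique p hp q (hP hle (hstep q hq)) (Ne.symm hne) (heq ▸ htag_carried q hq)
  have hinj : Set.InjOn tag (P 0 \ P j) := fun p hp q hq heq =>
    (le_total (step p) (step q)).elim (hearlier p hp q hq · heq)
      (fun hle => (hearlier q hq p hp hle heq.symm).symm)
  simpa using Set.ncard_le_ncard_of_injOn tag htag_mem hinj t.finite_toSet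

/-- Tags of a process: `inl i` for a round `i` in which it transmits, `inr v` for its length `v`. -/
def HasTag {n : ℕ} (ℓ : Fin n → ℕ) (π : Fin n → ℕ → Bool) (p : Fin n) : ℕ ⊕ ℕ → Prop :=
  Sum.elim (fun i => i ≤ ℓ p ∧ π p i = true) (ℓ p = ·)

section RemovalSequence

variable {n T : ℕ} {ℓ : Fin n → ℕ} {π : Fin n → ℕ → Bool} {P : ℕ → Set (Fin n)}

theorem antitone_of_removal
    (hodd : ∀ j : ℕ, P (2 * j + 1) = P (2 * j) \
      {p ∈ P (2 * j) | ∃ i : ℕ, 1 ≤ i ∧ i ≤ T ∧ (i ≤ ℓ p ∧ π p i = true) ∧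
        ∀ q ∈ P (2 * j), q ≠ p → ¬ (i ≤ ℓ q ∧ π q i = true)})
    (heven : ∀ j : ℕ, P (2 * j + 2) = P (2 * j + 1) \
      {p ∈ P (2 * j + 1) | ∀ q ∈ P (2 * j + 1), q ≠ p → ℓ p < ℓ q}) :
    Antitone P := by
  refine antitone_nat_of_succ_le fun k => ?_
  obtain ⟨m, rfl | rfl⟩ := Nat.even_or_odd' k
  · rw [hodd m]
    exact Set.sdiff_subset
  · rw [heven m]
    exact Set.sdiff_subset

theorem exists_unique_tag_of_removed (hℓ : ∀ p : Fin n, 1 ≤ ℓ p ∧ ℓ p ≤ T)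
    (hodd : ∀ j : ℕ, P (2 * j + 1) = P (2 * j) \
      {p ∈ P (2 * j) | ∃ i : ℕ, 1 ≤ i ∧ i ≤ T ∧ (i ≤ ℓ p ∧ π p i = true) ∧
        ∀ q ∈ P (2 * j), q ≠ p → ¬ (i ≤ ℓ q ∧ π q i = true)})
    (heven : ∀ j : ℕ, P (2 * j + 2) = P (2 * j + 1) \
      {p ∈ P (2 * j + 1) | ∀ q ∈ P (2 * j + 1), q ≠ p → ℓ p < ℓ q})
    (k : ℕ) (p : Fin n) (hp : p ∈ P k) (hremoved : p ∉ P (k + 1)) :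
    ∃ v ∈ (Finset.Icc 1 T).disjSum (Finset.Icc 1 T),
      HasTag ℓ π p v ∧ ∀ q ∈ P k, q ≠ p → ¬ HasTag ℓ π q v := by
  obtain ⟨m, rfl | rfl⟩ := Nat.even_or_odd' k
  · rw [hodd m, Set.mem_sdiff, not_and_not_right] at hremoved
    obtain ⟨-, i, hi₁, hiT, hpi, hunique⟩ := hremoved hp
    exact ⟨Sum.inl i, by simp [hi₁, hiT], hpi, hunique⟩
  · rw [heven m, Set.mem_sdiff, not_and_not_right] at hremoved
    obtain ⟨-, hmin⟩ := hremoved hp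
    exact ⟨Sum.inr (ℓ p), by simp [hℓ p], rfl, fun q hq hqp => (hmin q hq hqp).ne'⟩

end RemovalSequence

theorem removal_sequence_card_lower_bound_general (n T : ℕ)
    (ℓ : Fin n → ℕ) (π : Fin n → ℕ → Bool)
    (hℓ : ∀ p : Fin n, 1 ≤ ℓ p ∧ ℓ p ≤ T)
    (P : ℕ → Set (Fin n))
    (hP0 : P 0 = Set.univ)
    (hodd : ∀ j : ℕ, P (2 * j + 1) = P (2 * j) \
      {p ∈ P (2 * j) | ∃ i : ℕ, 1 ≤ i ∧ i ≤ T ∧ (i ≤ ℓ p ∧ π p i = true) ∧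
        ∀ q ∈ P (2 * j), q ≠ p → ¬ (i ≤ ℓ q ∧ π q i = true)})
    (heven : ∀ j : ℕ, P (2 * j + 2) = P (2 * j + 1) \
      {p ∈ P (2 * j + 1) | ∀ q ∈ P (2 * j + 1), q ≠ p → ℓ p < ℓ q}) :
    (∀ j : ℕ, n - 2 * T ≤ (P j).ncard) ∧
      (2 * T + 2 ≤ n → ∀ j : ℕ, 2 ≤ (P j).ncard) := by
  have hremoved (j : ℕ) : (P j)ᶜ.ncard ≤ 2 * T := by
    rw [Set.compl_eq_univ_sdiff, ← hP0]
    calc (P 0 \ P j).ncard ≤ ((Finset.Icc 1 T).disjSum (Finset.Icc 1 T)).card :=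
          ncard_diff_le_of_unique_tag (antitone_of_removal hodd heven)
            (exists_unique_tag_of_removed hℓ hodd heven) j
      _ = 2 * T := by simp [two_mul]
  have hbound (j : ℕ) : n - 2 * T ≤ (P j).ncard := by
    have hsum := Set.ncard_add_ncard_compl (P j)
    rw [Nat.card_fin] at hsum
    have := hremoved j
    omega
  exact ⟨hbound, fun _ j => by have := hbound j; omega⟩

/-- Cardinality lower bound along the removal sequence. -/
theorem removal_sequence_card_lower_bound (n T : ℕ) (hT : 0 < T)
    (ℓ : Fin n → ℕ) (π : Fin n → ℕ → Bool)
    (hℓ : ∀ p : Fin n, 1 ≤ ℓ p ∧ ℓ p ≤ T)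
    (P : ℕ → Set (Fin n))
    (hP0 : P 0 = Set.univ)
    (hodd : ∀ j : ℕ, P (2 * j + 1) = P (2 * j) \
      {p ∈ P (2 * j) | ∃ i : ℕ, 1 ≤ i ∧ i ≤ T ∧ (i ≤ ℓ p ∧ π p i = true) ∧
        ∀ q ∈ P (2 * j), q ≠ p → ¬ (i ≤ ℓ q ∧ π q i = true)})
    (heven : ∀ j : ℕ, P (2 * j + 2) = P (2 * j + 1) \
      {p ∈ P (2 * j + 1) | ∀ q ∈ P (2 * j + 1), q ≠ p → ℓ p < ℓ q}) :
    (∀ j : ℕ, n - 2 * T ≤ (P j).ncard) ∧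
      (2 * T + 2 ≤ n → ∀ j : ℕ, 2 ≤ (P j).ncard) :=
  removal_sequence_card_lower_bound_general n T ℓ π hℓ P hP0 hodd heven
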